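/- arXiv:2311.13377 — 3 statements merged into one kernel-verified Lean document; each statement's English description precedes it below -/
import Mathlib

section
/- Let T be a strongly connected tournament of order n ≥ 4, and let T_ncr be the subtournament induced by the set of non-critical vertices of T. If T_ncr is strongly connected, then either T = T_ncr, or T is the composition Δ(v_1,v_2,T_ncr) of the cyclic triple in which one vertex has been replaced by T_ncr (i.e., there are two vertices v_1,v_2 with v_1 → v_2, every vertex of T_ncr dominates v_1, and v_2 dominates every vertex of T_ncr). If T_ncr is not strongly connected, then T_ncr is not contained in any proper strongly connected subtournament of T. -/
/-- A tournament on a vertex type `V`: every ordered pair of distinct vertices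
carries exactly one arc. `adj v w = true` means there is an arc from `v` to `w`
(`v` dominates `w`). -/
structure Tournament (V : Type*) where
  adj : V → V → Bool
  irrefl : ∀ v, adj v v = false
  compl : ∀ v w, v ≠ w → adj v w = !adj w v

namespace Tournament

variable {V : Type*} {W : Type*}

/-- The subtournament induced on a set of vertices. -/
def restrict (T : Tournament V) (s : Set V) : Tournament s where
  adj a b := T.adj a b
  irrefl a := T.irrefl a
  compl a b h := T.compl a b (fun hab => h (Subtype.ext hab))

/-- A tournament is strongly connected if every vertex can be reached from
every other one by a directed path. -/
def Strong (T : Tournament V) : Prop :=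
  ∀ v w : V, Relation.ReflTransGen (fun a b => T.adj a b = true) v w

/-- A vertex of a tournament is non-critical if deleting it leaves a strongly
connected tournament. -/
def Noncritical (T : Tournament V) (w : V) : Prop :=
  (T.restrict {x | x ≠ w}).Strong

/-- There is a directed walk of length `k` from `v` to `w`. -/
def HasWalk (T : Tournament V) (v w : V) (k : ℕ) : Prop :=
  ∃ f : Fin (k + 1) → V, f 0 = v ∧ f (Fin.last k) = w ∧
    ∀ i : Fin k, T.adj (f i.castSucc) (f i.succ) = true

/-- The distance from `v` to `w`: the length of a shortest directed path. -/
noncomputable def dist (T : Tournament V) (v w : V) : ℕ :=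
  sInf {k | T.HasWalk v w k}

/-- The diameter: the maximum distance over ordered pairs of distinct vertices. -/
noncomputable def diam (T : Tournament V) : ℕ :=
  sSup {m | ∃ v w : V, v ≠ w ∧ T.dist v w = m}

/-- Cyclic successor on `Fin ℓ`. -/
def cyc {ℓ : ℕ} (i : Fin ℓ) : Fin ℓ :=
  if h : i.val + 1 < ℓ then ⟨i.val + 1, h⟩ else ⟨0, i.pos⟩

/-- The number of circuits (directed cycles through distinct vertices) of
length `ℓ` in `T`.  Each circuit is represented by exactly `ℓ` cyclic
parametrisations, whence the division. -/
noncomputable def circCount (T : Tournament V) (ℓ : ℕ) : ℕ :=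
  Nat.card {f : Fin ℓ → V // Function.Injective f ∧
    ∀ i : Fin ℓ, T.adj (f i) (f (cyc i)) = true} / ℓ

/-- The number of circuits of length `ℓ` in `T` passing through the vertex `w`. -/
noncomputable def circCountAt (T : Tournament V) (ℓ : ℕ) (w : V) : ℕ :=
  Nat.card {f : Fin ℓ → V // Function.Injective f ∧
    (∀ i : Fin ℓ, T.adj (f i) (f (cyc i)) = true) ∧ ∃ i, f i = w} / ℓ

/-- The number of strongly connected subtournaments of order `ℓ` in `T`. -/
noncomputable def strongSubCount (T : Tournament V) (ℓ : ℕ) : ℕ :=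
  Nat.card {s : Finset V // s.card = ℓ ∧ (T.restrict ↑s).Strong}

/-- Isomorphism of tournaments. -/
def Iso (T : Tournament V) (S : Tournament W) : Prop :=
  ∃ e : V ≃ W, ∀ a b : V, T.adj a b = S.adj (e a) (e b)

/-- Build a tournament from the function `f` recording which arcs point
"upwards" with respect to a linear order on the vertices. -/
def ofFn [LinearOrder V] (f : V → V → Bool) : Tournament V where
  adj u v := if u < v then f u v else if v < u then !f v u else false
  irrefl v := by simp
  compl u v h := by
    rcases lt_trichotomy u v with h1 | h1 | h1
    · simp [h1, not_lt_of_gt h1]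
    · exact absurd h1 h
    · simp [h1, not_lt_of_gt h1]

/-- The tournament `T_{n-1,n}(z_0,…,z_{n-1})`: `z_i → z_{i+1}` and `z_j → z_i`
for `j > i + 1`. -/
def lineT (n : ℕ) : Tournament (Fin n) :=
  ofFn fun i j => decide (j.val = i.val + 1)

end Tournament

/-!
Let `S` be a strong proper subset of `T` all of whose outside vertices are critical, and enlarge
it to a maximal strong proper subset `M`. A strong proper subset `M` of a strong tournament can
always be enlarged, either by one vertex with an in- and an out-neighbour in `M`, or, when there
is no such vertex, by two outside vertices `o → i` with `M ⇒ o` and `i ⇒ M`. Maximality therefore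
leaves at most two vertices outside `M`; one is impossible because that vertex would be
non-critical, and two force `T = Δ(o, i, T[M])`. In that configuration every vertex of `M` is
non-critical, so `M = S`. Applied to `S = T_ncr`, and to a proper strong `s ⊇ T_ncr`, this gives
both halves of the theorem.
-/

namespace Tournament

open Relation

variable {V : Type*} {T : Tournament V}

lemma ne_of_adj {p q : V} (h : T.adj p q = true) : p ≠ q := by
  rintro rfl
  simp [T.irrefl] at h

lemma adj_eq_false_of_adj {p q : V} (h : T.adj p q = true) : T.adj q p = false := by
  rw [T.compl q p (ne_of_adj h).symm, h]
  rfl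

lemma adj_of_not_adj {p q : V} (hne : p ≠ q) (h : T.adj q p ≠ true) : T.adj p q = true := by
  simpa [T.compl p q hne] using h

lemma Strong.exists_adj_out (hT : T.Strong) {P : Set V} {v w : V} (hv : v ∈ P) (hw : w ∉ P) :
    ∃ a ∈ P, ∃ b ∉ P, T.adj a b = true := by
  by_contra! h
  have hreach : ∀ u, ReflTransGen (fun a b => T.adj a b = true) v u → u ∈ P := by
    intro u hu
    induction hu with
    | refl => exact hv
    | tail _ hab ih => exact not_not.mp fun hb => (h _ ih _ hb) hab
  exact hw (hreach w (hT v w))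

def AdjIn (T : Tournament V) (s : Set V) (p q : V) : Prop :=
  p ∈ s ∧ q ∈ s ∧ T.adj p q = true

lemma AdjIn.mono {s t : Set V} (hst : s ⊆ t) {p q : V} (h : T.AdjIn s p q) : T.AdjIn t p q :=
  ⟨hst h.1, hst h.2.1, h.2.2⟩

lemma strong_restrict_iff {s : Set V} :
    (T.restrict s).Strong ↔ ∀ v ∈ s, ∀ w ∈ s, ReflTransGen (T.AdjIn s) v w := by
  constructor
  · intro h v hv w hw
    exact ReflTransGen.lift (p := T.AdjIn s) Subtype.val (fun a b hab => ⟨a.2, b.2, hab⟩) _ _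
      (h ⟨v, hv⟩ ⟨w, hw⟩)
  · intro h v w
    have hlift : ∀ {v w : V}, ReflTransGen (T.AdjIn s) v w → ∀ (hv : v ∈ s) (hw : w ∈ s),
        ReflTransGen (fun a b : s => (T.restrict s).adj a b = true) ⟨v, hv⟩ ⟨w, hw⟩ := by
      intro v w hvw
      induction hvw with
      | refl => exact fun _ _ => ReflTransGen.refl
      | tail _ hab ih => exact fun hv _ => (ih hv hab.1).tail hab.2.2
    exact hlift (h v v.2 w w.2) v.2 w.2

lemma strong_restrict_of_hub {s : Set V} {h : V}
    (hto : ∀ u ∈ s, ReflTransGen (T.AdjIn s) u h) (hfrom : ∀ u ∈ s, ReflTransGen (T.AdjIn s) h u) :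
    (T.restrict s).Strong :=
  strong_restrict_iff.mpr fun v hv w hw => (hto v hv).trans (hfrom w hw)

lemma strong_restrict_singleton (v : V) : (T.restrict {v}).Strong :=
  strong_restrict_of_hub (h := v) (by rintro _ rfl; exact .refl) (by rintro _ rfl; exact .refl)

section Extension

variable {S : Set V} (hS : (T.restrict S).Strong)
include hS

lemma strong_restrict_insert {v s₁ s₂ : V} (hs₁ : s₁ ∈ S) (hs₂ : s₂ ∈ S)
    (h₁ : T.adj s₁ v = true) (h₂ : T.adj v s₂ = true) : (T.restrict (insert v S)).Strong := by
  have hsub : S ⊆ insert v S := Set.subset_insert v S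
  have hv : v ∈ insert v S := Set.mem_insert v S
  have inS : ∀ {p q}, p ∈ S → q ∈ S → ReflTransGen (T.AdjIn (insert v S)) p q :=
    fun hp hq => ReflTransGen.mono (fun _ _ => AdjIn.mono hsub) _ _ (strong_restrict_iff.mp hS _ hp _ hq)
  refine strong_restrict_of_hub (h := v) ?_ ?_
  · rintro u (rfl | hu)
    · exact ReflTransGen.refl
    · exact (inS hu hs₁).tail ⟨hsub hs₁, hv, h₁⟩
  · rintro u (rfl | hu)
    · exact ReflTransGen.refl
    · exact ReflTransGen.head ⟨hv, hsub hs₂, h₂⟩ (inS hs₂ hu)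

lemma strong_restrict_insert_insert {o i s₀ : V} (hs₀ : s₀ ∈ S) (h₀ : T.adj s₀ o = true)
    (hoi : T.adj o i = true) (hi : T.adj i s₀ = true) :
    (T.restrict (insert o (insert i S))).Strong := by
  set s := insert o (insert i S)
  have hsub : S ⊆ s := (Set.subset_insert i S).trans (Set.subset_insert o _)
  have ho : o ∈ s := Set.mem_insert o _
  have hi' : i ∈ s := Set.mem_insert_of_mem o (Set.mem_insert i S)
  have inS : ∀ {p q}, p ∈ S → q ∈ S → ReflTransGen (T.AdjIn s) p q :=
    fun hp hq => ReflTransGen.mono (fun _ _ => AdjIn.mono hsub) _ _ (strong_restrict_iff.mp hS _ hp _ hq)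
  have s₀_to_o : ReflTransGen (T.AdjIn s) s₀ o := .single ⟨hsub hs₀, ho, h₀⟩
  have o_to_s₀ : ReflTransGen (T.AdjIn s) o s₀ :=
    .head ⟨ho, hi', hoi⟩ (.single ⟨hi', hsub hs₀, hi⟩)
  refine strong_restrict_of_hub (h := o) ?_ ?_
  · rintro u (rfl | rfl | hu)
    · exact .refl
    · exact .head ⟨hi', hsub hs₀, hi⟩ s₀_to_o
    · exact (inS hu hs₀).trans s₀_to_o
  · rintro u (rfl | rfl | hu)
    · exact .refl
    · exact .single ⟨ho, hi', hoi⟩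
    · exact o_to_s₀.trans (inS hs₀ hu)

end Extension

/-- If no vertex outside `S` has both an in-neighbour and an out-neighbour in `S`, the outside
vertices split into those dominated by `S` and those dominating `S`, and strong connectivity
forces an arc from the first class to the second. -/
lemma Strong.exists_out_in (hT : T.Strong) {S : Set V} {s₀ a : V} (hs₀ : s₀ ∈ S) (ha : a ∉ S)
    (hmix : ∀ v ∉ S, ∀ s₁ ∈ S, ∀ s₂ ∈ S, T.adj s₁ v = true → T.adj v s₂ = true → False) :
    ∃ o ∉ S, ∃ i ∉ S, (∀ s ∈ S, T.adj s o = true) ∧ T.adj o i = true ∧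
      ∀ s ∈ S, T.adj i s = true := by
  set O := {v | v ∉ S ∧ ∀ s ∈ S, T.adj s v = true}
  obtain ⟨s, hs, o, ho, hso⟩ := hT.exists_adj_out hs₀ ha
  have hoO : o ∈ O := ⟨ho, fun s' hs' => adj_of_not_adj (fun h => ho (h ▸ hs'))
    fun hos' => hmix o ho s hs s' hs' hso hos'⟩
  have hs₀O : s₀ ∉ O := fun h => h.1 hs₀
  obtain ⟨o', ⟨ho', hSo'⟩, i, hiO, hoi⟩ := hT.exists_adj_out hoO hs₀O
  have hi : i ∉ S := fun h => by simp [adj_eq_false_of_adj (hSo' i h)] at hoi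
  refine ⟨o', ho', i, hi, hSo', hoi, fun s' hs' => ?_⟩
  refine adj_of_not_adj (fun h => hi (h ▸ hs')) fun hs'i => hiO ⟨hi, fun s'' hs'' => ?_⟩
  exact adj_of_not_adj (fun h => hi (h ▸ hs'')) fun his'' => hmix i hi s' hs' s'' hs'' hs'i his''

/-- `T = Δ(v₁, v₂, T[S])`: the cyclic triple with one vertex replaced by `T[S]`. -/
structure IsDelta (T : Tournament V) (S : Set V) (v₁ v₂ : V) : Prop where
  compl_eq : Sᶜ = {v₁, v₂}
  adj₁₂ : T.adj v₁ v₂ = true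
  adj_to₁ : ∀ s ∈ S, T.adj s v₁ = true
  adj_from₂ : ∀ s ∈ S, T.adj v₂ s = true

namespace IsDelta

variable {S : Set V} {v₁ v₂ : V} (hΔ : T.IsDelta S v₁ v₂)
include hΔ

lemma left_notMem : v₁ ∉ S := by
  have : v₁ ∈ Sᶜ := by simp [hΔ.compl_eq]
  exact this

lemma right_notMem : v₂ ∉ S := by
  have : v₂ ∈ Sᶜ := by simp [hΔ.compl_eq]
  exact this

lemma mem_or (u : V) : u ∈ S ∨ u = v₁ ∨ u = v₂ := by
  by_cases hu : u ∈ S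
  · exact .inl hu
  · have : u ∈ Sᶜ := hu
    rw [hΔ.compl_eq] at this
    exact .inr this

lemma noncritical {x y : V} (hx : x ∈ S) (hy : y ∈ S) (hyx : y ≠ x) : T.Noncritical x := by
  have h₁ : v₁ ≠ x := fun h => hΔ.left_notMem (h ▸ hx)
  have h₂ : v₂ ≠ x := fun h => hΔ.right_notMem (h ▸ hx)
  refine strong_restrict_of_hub (s := {u | u ≠ x}) (h := v₁) ?_ ?_
  · intro u hu
    rcases hΔ.mem_or u with hu' | rfl | rfl
    · exact .single ⟨hu, h₁, hΔ.adj_to₁ u hu'⟩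
    · exact .refl
    · exact .head ⟨h₂, hyx, hΔ.adj_from₂ y hy⟩ (.single ⟨hyx, h₁, hΔ.adj_to₁ y hy⟩)
  · intro u hu
    rcases hΔ.mem_or u with hu' | rfl | rfl
    · exact .head ⟨h₁, h₂, hΔ.adj₁₂⟩ (.single ⟨h₂, hu, hΔ.adj_from₂ u hu'⟩)
    · exact .refl
    · exact .single ⟨h₁, h₂, hΔ.adj₁₂⟩

lemma subset_noncritical (hV : 4 ≤ Nat.card V) : S ⊆ {x | T.Noncritical x} := by
  have : Finite V := Nat.finite_of_card_ne_zero (by omega)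
  intro x hx
  have hSc : Sᶜ.ncard = 2 := by rw [hΔ.compl_eq, Set.ncard_pair (ne_of_adj hΔ.adj₁₂)]
  have hS := Set.ncard_add_ncard_compl S
  obtain ⟨y, hy, hyx⟩ := Set.exists_ne_of_one_lt_ncard (s := S) (by omega) x
  exact hΔ.noncritical hx hy hyx

end IsDelta

theorem exists_isDelta (hV : 4 ≤ Nat.card V) (hT : T.Strong) {S : Set V}
    (hS : (T.restrict S).Strong) (hSV : S ≠ Set.univ)
    (hcrit : ∀ a ∉ S, ¬ T.Noncritical a) : ∃ v₁ v₂, T.IsDelta S v₁ v₂ := by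
  have : Finite V := Nat.finite_of_card_ne_zero (by omega)
  obtain ⟨M, hSM, ⟨-, hMV, hM⟩, hmax⟩ := Finite.exists_le_maximal
    (p := fun M : Set V => S ⊆ M ∧ M ≠ Set.univ ∧ (T.restrict M).Strong) ⟨le_rfl, hSV, hS⟩
  have hgrow : ∀ {M'}, (T.restrict M').Strong → M ⊂ M' → M' = Set.univ := fun hM' hMM' =>
    by_contra fun hM'V => hMM'.not_subset (hmax ⟨hSM.trans hMM'.subset, hM'V, hM'⟩ hMM'.subset)
  obtain ⟨a, haM⟩ := Set.nonempty_compl.mpr hMV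
  have htwo_out : ∀ {v}, v ∉ M → insert v M ≠ Set.univ := by
    intro v hv hvM
    refine hcrit a (fun haS => haM (hSM haS)) ?_
    have : {x | x ≠ a} = M := by
      ext x
      have hx := hvM ▸ Set.mem_univ x
      have ha := hvM ▸ Set.mem_univ a
      simp only [Set.mem_insert_iff] at hx ha
      grind
    rw [Noncritical, this]
    exact hM
  obtain ⟨s₀, hs₀⟩ : M.Nonempty := by
    rw [Set.nonempty_iff_ne_empty]
    rintro rfl
    have ha := htwo_out (Set.notMem_empty a)
    rw [insert_empty_eq] at ha
    exact ha (hgrow (strong_restrict_singleton a) (Set.singleton_nonempty a).empty_ssubset)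
  have hmix : ∀ v ∉ M, ∀ s₁ ∈ M, ∀ s₂ ∈ M, T.adj s₁ v = true → T.adj v s₂ = true → False :=
    fun v hv s₁ hs₁ s₂ hs₂ h₁ h₂ => htwo_out hv
      (hgrow (strong_restrict_insert hM hs₁ hs₂ h₁ h₂) (Set.ssubset_insert hv))
  obtain ⟨o, ho, i, hi, hMo, hoi, hiM⟩ := hT.exists_out_in hs₀ haM hmix
  have hΔ : T.IsDelta M o i := by
    refine ⟨?_, hoi, hMo, hiM⟩
    have hall := hgrow (strong_restrict_insert_insert hM hs₀ (hMo s₀ hs₀) hoi (hiM s₀ hs₀))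
      ((Set.ssubset_insert hi).trans_subset (Set.subset_insert o _))
    ext u
    have hu := hall ▸ Set.mem_univ u
    simp only [Set.mem_insert_iff] at hu
    simp only [Set.mem_compl_iff, Set.mem_insert_iff, Set.mem_singleton_iff]
    grind
  have hMS : M ⊆ S := fun x hx => not_not.mp fun hxS => hcrit x hxS (hΔ.subset_noncritical hV hx)
  exact ⟨o, i, (hSM.antisymm hMS) ▸ hΔ⟩

end Tournament

/-- **Lemma 1.** Let `T` be a strongly connected tournament of order `n ≥ 4`
and `T_ncr` the subtournament induced by the non-critical vertices. If
`T_ncr` is strong then either `T = T_ncr` or `T = Δ(v_1, v_2, T_ncr)`;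
otherwise `T_ncr` is not contained in any proper strongly connected
subtournament of `T`. -/
theorem statement_4 (n : ℕ) (hn : 4 ≤ n) {V : Type} (T : Tournament V)
    (hcard : Nat.card V = n) (hT : T.Strong) :
    ((T.restrict {x | T.Noncritical x}).Strong →
      ({x : V | T.Noncritical x} = Set.univ ∨
        ∃ v1 v2 : V, v1 ≠ v2 ∧ ¬ T.Noncritical v1 ∧ ¬ T.Noncritical v2 ∧
          {x : V | T.Noncritical x} ∪ {v1, v2} = Set.univ ∧
          T.adj v1 v2 = true ∧
          ∀ w : V, T.Noncritical w → (T.adj w v1 = true ∧ T.adj v2 w = true))) ∧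
    (¬ (T.restrict {x | T.Noncritical x}).Strong →
      ∀ s : Set V, s ≠ Set.univ → (T.restrict s).Strong →
        ¬ {x : V | T.Noncritical x} ⊆ s) := by
  have hV : 4 ≤ Nat.card V := hcard ▸ hn
  constructor
  · intro hN
    refine or_iff_not_imp_left.mpr fun hNV => ?_
    obtain ⟨v₁, v₂, hΔ⟩ := Tournament.exists_isDelta hV hT hN hNV fun _ ha => ha
    refine ⟨v₁, v₂, Tournament.ne_of_adj hΔ.adj₁₂, hΔ.left_notMem, hΔ.right_notMem, ?_, hΔ.adj₁₂,
      fun w hw => ⟨hΔ.adj_to₁ w hw, hΔ.adj_from₂ w hw⟩⟩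
    rw [← hΔ.compl_eq, Set.union_compl_self]
  · intro hN s hsV hs hNs
    obtain ⟨v₁, v₂, hΔ⟩ := Tournament.exists_isDelta hV hT hs hsV fun _ ha hna => ha (hNs hna)
    exact hN ((hNs.antisymm (hΔ.subset_noncritical hV)) ▸ hs)
end

section
/- Let T be a tournament of order n > 1 with vertices w_1,...,w_n and let T_1,...,T_n be vertex-disjoint tournaments. Then the composition T(T_1,...,T_n) is strongly connected if and only if T is strongly connected. In that case, the set of non-critical vertices of T(T_1,...,T_n) consists exactly of the vertices belonging to those T_r with |T_r| ≥ 2, together with the vertices of those T_r with |T_r| = 1 for which the corresponding vertex w_r of T is non-critical in T. -/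
namespace TournamentAux

open Tournament Relation

variable {V W : Type*}

lemma adj_ne {T : Tournament V} {v w : V} (h : T.adj v w = true) : v ≠ w := by
  rintro rfl
  rw [T.irrefl] at h
  exact Bool.false_ne_true h

lemma adj_rev {T : Tournament V} {v w : V} (hne : v ≠ w)
    (h : T.adj v w = false) : T.adj w v = true := by
  have h2 := T.compl v w hne
  rw [h] at h2
  simpa using h2.symm

lemma proj_walk (T : Tournament V) (U : Tournament W) (π : W → V)
    (hcomp : ∀ a b : W, π a ≠ π b → U.adj a b = T.adj (π a) (π b))
    {a b : W} (h : ReflTransGen (fun p q => U.adj p q = true) a b) :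
    ReflTransGen (fun p q => T.adj p q = true) (π a) (π b) := by
  induction h with
  | refl => exact .refl
  | @tail b c hab hbc ih =>
    by_cases hp : π b = π c
    · rwa [hp] at ih
    · exact ih.tail (by rw [← hcomp b c hp]; exact hbc)

lemma lift_walk (T : Tournament V) (U : Tournament W) (π : W → V)
    (hsurj : Function.Surjective π)
    (hcomp : ∀ a b : W, π a ≠ π b → U.adj a b = T.adj (π a) (π b))
    {v w : V} (h : ReflTransGen (fun p q => T.adj p q = true) v w)
    (hvw : v ≠ w) {b : W} (hb : π b = w) :
    ∀ a : W, π a = v → ReflTransGen (fun p q => U.adj p q = true) a b := by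
  revert hvw
  induction h using Relation.ReflTransGen.head_induction_on with
  | refl => exact fun hvw => absurd rfl hvw
  | @head v c h1 h2 ih =>
    intro _ a ha
    by_cases hcw : c = w
    · subst hcw
      refine ReflTransGen.single ?_
      have hne : π a ≠ π b := by rw [ha, hb]; exact adj_ne h1
      rw [hcomp a b hne, ha, hb]; exact h1
    · obtain ⟨a', ha'⟩ := hsurj c
      have step : U.adj a a' = true := by
        have hne : π a ≠ π a' := by rw [ha, ha']; exact adj_ne h1
        rw [hcomp a a' hne, ha, ha']; exact h1
      exact ReflTransGen.head step (ih hcw a' ha')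

lemma strong_of (T : Tournament V) (U : Tournament W) (π : W → V)
    (hV : Nontrivial V)
    (hsurj : Function.Surjective π)
    (hcomp : ∀ a b : W, π a ≠ π b → U.adj a b = T.adj (π a) (π b))
    (hT : T.Strong) : U.Strong := by
  intro x y
  by_cases hxy : π x = π y
  · by_cases hx : x = y
    · exact hx ▸ .refl
    · obtain ⟨v, hv⟩ := exists_ne (π x)
      obtain ⟨c, hc⟩ := hsurj v
      exact (lift_walk T U π hsurj hcomp (hT (π x) v) (Ne.symm hv) hc x rfl).trans
        (lift_walk T U π hsurj hcomp (hT v (π y)) (hxy ▸ hv) rfl c hc)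
  · exact lift_walk T U π hsurj hcomp (hT (π x) (π y)) hxy rfl x rfl

lemma exists_third (T : Tournament V) (hT : T.Strong) {v w : V}
    (hvw : T.adj v w = true) : ∃ u, u ≠ v ∧ u ≠ w := by
  rcases (hT w v).cases_head with h | ⟨z, hz1, _⟩
  · exact absurd h.symm (adj_ne hvw)
  · refine ⟨z, ?_, ?_⟩
    · rintro rfl
      have h2 := T.compl _ _ (adj_ne hvw)
      rw [hvw, hz1] at h2
      simp at h2
    · rintro rfl
      rw [T.irrefl] at hz1
      exact Bool.false_ne_true hz1

lemma exists_two_ne (T : Tournament V) (hT : T.Strong) (hV : Nontrivial V)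
    (p : V) : ∃ u₁ u₂ : V, u₁ ≠ u₂ ∧ u₁ ≠ p ∧ u₂ ≠ p := by
  obtain ⟨q, hq⟩ := exists_ne p
  cases hpq : T.adj p q with
  | true =>
    obtain ⟨z, hz1, hz2⟩ := exists_third T hT hpq
    exact ⟨q, z, fun h => hz2 h.symm, hq, hz1⟩
  | false =>
    have hqp : T.adj q p = true := adj_rev (Ne.symm hq) hpq
    obtain ⟨z, hz1, hz2⟩ := exists_third T hT hqp
    exact ⟨q, z, fun h => hz1 h.symm, hq, hz2⟩

end TournamentAux

/-- **Lemma 2.** A composition `U = T(T_1,…,T_n)` (encoded by the block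
projection `π : W → V` such that arcs between distinct blocks follow `T`) of
a tournament `T` of order `n > 1` is strongly connected iff `T` is.  In that
case a vertex `x` of the composition is non-critical iff its block has at
least two vertices, or its block is a singleton whose corresponding vertex
`π x` is non-critical in `T`. -/
theorem statement_5 {V W : Type} [Finite V] [Finite W]
    (T : Tournament V) (U : Tournament W) (hn : 1 < Nat.card V)
    (π : W → V) (hsurj : Function.Surjective π)
    (hcomp : ∀ a b : W, π a ≠ π b → U.adj a b = T.adj (π a) (π b)) :
    (U.Strong ↔ T.Strong) ∧
    (U.Strong → ∀ x : W,
      (U.Noncritical x ↔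
        ((∃ y : W, y ≠ x ∧ π y = π x) ∨ T.Noncritical (π x)))) := by
  classical
  open TournamentAux in
  have hV : Nontrivial V := Finite.one_lt_card_iff_nontrivial.mp hn
  -- forward direction: U strong → T strong
  have hUT : U.Strong → T.Strong := by
    intro hU v w
    obtain ⟨a, ha⟩ := hsurj v
    obtain ⟨b, hb⟩ := hsurj w
    have h := proj_walk T U π hcomp (hU a b)
    rwa [ha, hb] at h
  refine ⟨⟨hUT, strong_of T U π hV hsurj hcomp⟩, ?_⟩
  intro hU x
  have hT : T.Strong := hUT hU
  -- case (a): block of x has another vertex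
  have caseA : (∃ y : W, y ≠ x ∧ π y = π x) → U.Noncritical x := by
    rintro ⟨y, hy, hyx⟩
    refine strong_of T (U.restrict {z | z ≠ x}) (fun z => π z.val) hV ?_ ?_ hT
    · intro v
      by_cases hv : v = π x
      · exact ⟨⟨y, hy⟩, hv ▸ hyx⟩
      · obtain ⟨a, ha⟩ := hsurj v
        exact ⟨⟨a, fun h => hv (by rw [← ha, h])⟩, ha⟩
    · intro a b hne
      exact hcomp a.val b.val hne
  constructor
  · intro hnc
    by_cases hy : ∃ y : W, y ≠ x ∧ π y = π x
    · exact Or.inl hy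
    · right
      push_neg at hy
      -- π maps W \ {x} into V \ {π x}
      have hblock : ∀ z : W, z ≠ x → π z ≠ π x := hy
      intro v w
      obtain ⟨a, ha⟩ := hsurj v.val
      obtain ⟨b, hb⟩ := hsurj w.val
      have hax : a ≠ x := fun h => v.2 (by rw [← ha, h])
      have hbx : b ≠ x := fun h => w.2 (by rw [← hb, h])
      have h := proj_walk (T.restrict {u | u ≠ π x}) (U.restrict {z | z ≠ x})
        (fun z => ⟨π z.val, hblock z.val z.2⟩)
        (fun a b hne => hcomp a.val b.val (fun h => hne (Subtype.ext h)))
        (hnc ⟨a, hax⟩ ⟨b, hbx⟩)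
      have hva : v = ⟨π a, hblock a hax⟩ := Subtype.ext ha.symm
      have hvb : w = ⟨π b, hblock b hbx⟩ := Subtype.ext hb.symm
      rw [hva, hvb]
      exact h
  · rintro (h | hnc)
    · exact caseA h
    · by_cases hy : ∃ y : W, y ≠ x ∧ π y = π x
      · exact caseA hy
      · push_neg at hy
        have hblock : ∀ z : W, z ≠ x → π z ≠ π x := hy
        obtain ⟨u₁, u₂, h12, h1p, h2p⟩ := exists_two_ne T hT hV (π x)
        have hV' : Nontrivial {u | u ≠ π x} :=
          ⟨⟨u₁, h1p⟩, ⟨u₂, h2p⟩, fun h => h12 (congrArg Subtype.val h)⟩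
        refine strong_of (T.restrict {u | u ≠ π x}) (U.restrict {z | z ≠ x})
          (fun z => ⟨π z.val, hblock z.val z.2⟩) hV' ?_ ?_ hnc
        · rintro ⟨v, hv⟩
          obtain ⟨a, ha⟩ := hsurj v
          have hax : a ≠ x := fun h => hv (by rw [← ha, h])
          exact ⟨⟨a, hax⟩, Subtype.ext ha⟩
        · intro a b hne
          exact hcomp a.val b.val (fun h => hne (Subtype.ext h))
end

section
/- Let n > d ≥ 3 with 2d ≥ n+3, and let ℓ be an integer with n−d+3 ≤ ℓ ≤ d. Let w be any vertex of the block TT_{⌈(n−d+1)/2⌉} of the tournament T_{d,n}^−. Then the number of circuits of length ℓ in T_{d,n}^− passing through w equals 2^{⌈(n−d+1)/2⌉ − 1}. -/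
/-- Block index used to describe `T_{d,n}`: the vertices `0,…,a-1` form the
first block (corresponding to `z_0` of `T_{d,d+1}`), the next `d-1` vertices
are the singleton blocks `z_1,…,z_{d-1}`, and the remaining vertices form the
last block (corresponding to `z_d`). -/
def blockIdx (a d x : ℕ) : ℕ :=
  if x < a then 0 else if x < a + d - 1 then x - a + 1 else d

/-- The composition `T_{d,d+1}(TT_a, v_1, …, v_{d-1}, TT_b)` on `Fin n`
(`b = n - a - (d-1)`): within a block the tournament is transitive, and
between distinct blocks the arcs follow `T_{d,d+1}`. -/
def TdnAux (a d n : ℕ) : Tournament (Fin n) :=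
  Tournament.ofFn fun i j => decide (blockIdx a d j.val ≤ blockIdx a d i.val + 1)

/-- `T_{d,n} = T_{d,d+1}(TT_{⌊(n-d+1)/2⌋}, v_1, …, v_{d-1}, TT_{⌈(n-d+1)/2⌉})`. -/
def Tdn (d n : ℕ) : Tournament (Fin n) := TdnAux ((n - d + 1) / 2) d n

/-- `T_{d,n}^- = T_{d,d+1}(TT_{⌈(n-d+1)/2⌉}, v_1, …, v_{d-1}, TT_{⌊(n-d+1)/2⌋})`. -/
def Tdnm (d n : ℕ) : Tournament (Fin n) := TdnAux ((n - d + 2) / 2) d n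

/-!
In `TdnAux a d n` the first `a` vertices form a transitive block, the next `d - 1` vertices
`a, a+1, …` are singleton blocks, and an arc goes at most one block up or at least two blocks
down. A circuit through a vertex `w` of the first block must leave that block, and can only do so
to the vertex `a`. From there it climbs the singleton blocks one at a time (it can never drop to a
singleton it has already visited), and since `ℓ ≤ d` it drops back into the first block before
reaching the last one; there it runs upwards until it returns to `a`. So a circuit through `w`
started at `a` is determined by the set `S ∋ w` of its first-block vertices, and conversely every
such `S` gives one because `|S| + 2 ≤ a + 2 ≤ ℓ` makes the drop span two blocks. This gives
`2 ^ (a - 1)` rooted circuits, and each circuit has `ℓ` rotations.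
-/

open Finset

lemma Finset.natCard_subset_and_mem {α : Type*} [DecidableEq α] {B : Finset α} {w : α}
    (hw : w ∈ B) : Nat.card {S : Finset α // S ⊆ B ∧ w ∈ S} = 2 ^ (#B - 1) := by
  rw [← card_erase_of_mem hw, ← card_powerset, ← Nat.card_eq_finsetCard]
  symm
  refine Nat.card_eq_of_bijective
    (fun T => ⟨insert w T.1, insert_subset hw ((mem_powerset.mp T.2).trans (erase_subset w B)),
      mem_insert_self w _⟩) ⟨?_, ?_⟩
  · rintro ⟨T, hT⟩ ⟨T', hT'⟩ h
    have hwT : w ∉ T := fun hwT => notMem_erase w B (mem_powerset.mp hT hwT)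
    have hwT' : w ∉ T' := fun hwT' => notMem_erase w B (mem_powerset.mp hT' hwT')
    rw [Subtype.mk.injEq, ← erase_insert hwT, ← erase_insert hwT']
    exact congrArg (erase · w) (congrArg Subtype.val h)
  · rintro ⟨S, hSB, hwS⟩
    exact ⟨⟨S.erase w, mem_powerset.mpr (erase_subset_erase w hSB)⟩, Subtype.ext (insert_erase hwS)⟩

namespace Tournament

variable {V : Type*} {ℓ : ℕ}

lemma val_cyc_of_lt {i : Fin ℓ} (h : i.val + 1 < ℓ) : (cyc i).val = i.val + 1 := by
  simp [cyc, h]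

lemma val_cyc_of_eq {i : Fin ℓ} (h : i.val + 1 = ℓ) : (cyc i).val = 0 := by
  simp [cyc, h]

lemma cyc_eq_add_one [NeZero ℓ] (i : Fin ℓ) : cyc i = i + 1 := by
  ext
  rcases Nat.lt_or_ge (i.val + 1) ℓ with h | h
  · rw [val_cyc_of_lt h, Fin.val_add_one_of_lt' h]
  · rw [val_cyc_of_eq (by omega), Fin.val_add, Fin.val_one', Nat.add_mod_mod]
    have := i.isLt
    rw [show i.val + 1 = ℓ by omega, Nat.mod_self]

def IsCircuit (T : Tournament V) (f : Fin ℓ → V) : Prop :=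
  Function.Injective f ∧ ∀ i, T.adj (f i) (f (cyc i)) = true

lemma circCountAt_eq_card_div (T : Tournament V) (ℓ : ℕ) (w : V) :
    T.circCountAt ℓ w = Nat.card {f : Fin ℓ → V // T.IsCircuit f ∧ ∃ i, f i = w} / ℓ := by
  simp only [circCountAt, IsCircuit, and_assoc]

lemma IsCircuit.comp_add_right [NeZero ℓ] {T : Tournament V} {f : Fin ℓ → V}
    (hf : T.IsCircuit f) (r : Fin ℓ) : T.IsCircuit fun i => f (i + r) := by
  refine ⟨hf.1.comp (add_left_injective r), fun i => ?_⟩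
  simpa only [cyc_eq_add_one, add_right_comm] using hf.2 (i + r)

lemma IsCircuit.comp_sub_right [NeZero ℓ] {T : Tournament V} {f : Fin ℓ → V}
    (hf : T.IsCircuit f) (r : Fin ℓ) : T.IsCircuit fun i => f (i - r) := by
  simpa only [sub_eq_add_neg] using hf.comp_add_right (-r)

/-- Every circuit through `u` is, in exactly one way, a rotation of one starting at `u`. -/
lemma card_isCircuit_through_eq_mul [NeZero ℓ] (T : Tournament V) (w u : V) :
    Nat.card {f : Fin ℓ → V // T.IsCircuit f ∧ (∃ i, f i = w) ∧ ∃ i, f i = u} =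
      ℓ * Nat.card {f : Fin ℓ → V // T.IsCircuit f ∧ (∃ i, f i = w) ∧ f 0 = u} := by
  let rotate (p : Fin ℓ × {f : Fin ℓ → V // T.IsCircuit f ∧ (∃ i, f i = w) ∧ f 0 = u}) :
      {f : Fin ℓ → V // T.IsCircuit f ∧ (∃ i, f i = w) ∧ ∃ i, f i = u} :=
    ⟨fun i => p.2.1 (i - p.1), p.2.2.1.comp_sub_right p.1,
      by obtain ⟨i, hi⟩ := p.2.2.2.1; exact ⟨i + p.1, by simpa using hi⟩,
      p.1, by simpa using p.2.2.2.2⟩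
  have hrotate : Function.Bijective rotate := by
    constructor
    · rintro ⟨r, g, hg, _, hg0⟩ ⟨r', g', hg', _, hg0'⟩ h
      replace h : ∀ i, g (i - r) = g' (i - r') := congrFun (congrArg Subtype.val h)
      have hr : r = r' := by
        have := h r
        rw [sub_self] at this
        exact sub_eq_zero.mp (hg'.1 (this.symm.trans (hg0.trans hg0'.symm)))
      subst hr
      simp only [Prod.mk.injEq, Subtype.mk.injEq, true_and]
      funext i
      simpa using h (i + r)
    · rintro ⟨f, hf, ⟨j, hj⟩, i, hi⟩
      exact ⟨(i, ⟨fun k => f (k + i), hf.comp_add_right i, ⟨j - i, by simpa using hj⟩,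
        by simpa using hi⟩), by simp [rotate]⟩
  rw [← Nat.card_eq_of_bijective rotate hrotate, Nat.card_prod, Nat.card_fin]

end Tournament

namespace TdnAux

open Tournament

variable {a d n ℓ : ℕ}

lemma adj_iff (u v : Fin n) : (TdnAux a d n).adj u v = true ↔
    u.val < v.val ∧ blockIdx a d v ≤ blockIdx a d u + 1 ∨
      v.val < u.val ∧ blockIdx a d v + 2 ≤ blockIdx a d u := by
  simp only [TdnAux, ofFn, Fin.lt_def]
  split_ifs <;> simp <;> omega

lemma lt_of_adj_of_lt (hd : 2 ≤ d) {u v : Fin n} (h : (TdnAux a d n).adj u v = true)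
    (hu : u.val < a) : u.val < v.val ∧ v.val ≤ a := by
  rw [adj_iff] at h
  unfold blockIdx at h
  split_ifs at h <;> omega

lemma val_eq_succ_or_lt_of_adj {u v : Fin n} (h : (TdnAux a d n).adj u v = true) (hu : a ≤ u.val)
    (hud : u.val + 3 ≤ a + d) : v.val = u.val + 1 ∨ v.val + 1 < u.val := by
  rw [adj_iff] at h
  unfold blockIdx at h
  split_ifs at h <;> omega

lemma exists_val_eq_of_isCircuit (hd : 2 ≤ d) {f : Fin ℓ → Fin n}
    (hf : (TdnAux a d n).IsCircuit f) {i : Fin ℓ} (hi : (f i).val < a) : ∃ j, (f j).val = a := by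
  obtain ⟨j, hj, hmax⟩ := exists_max_image {j | (f j).val < a} (fun j => (f j).val) ⟨i, by simpa⟩
  simp only [mem_filter, mem_univ, true_and] at hj hmax
  obtain ⟨hlt, hle⟩ := lt_of_adj_of_lt hd (hf.2 j) hj
  exact ⟨cyc j, le_antisymm hle (not_lt.mp fun h => (hmax _ h).not_gt hlt)⟩

/-- The circuit `a, a+1, …, a+k-1, s₁, …, sₘ` of `TdnAux a d n` with `s₁ < ⋯ < sₘ` the elements
of `S` and `k = ℓ - m` (meant for `S` inside the first block). -/
def blockCircuit (a ℓ : ℕ) (S : Finset (Fin n)) (h : a + ℓ ≤ n + #S) (j : Fin ℓ) : Fin n :=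
  if hj : j.val < ℓ - #S then ⟨a + j, by omega⟩
  else S.orderEmbOfFin rfl ⟨j - (ℓ - #S), by omega⟩

section BlockCircuit

variable {S : Finset (Fin n)} {h : a + ℓ ≤ n + #S}

lemma val_blockCircuit_of_lt {j : Fin ℓ} (hj : j.val < ℓ - #S) :
    (blockCircuit a ℓ S h j).val = a + j := by
  simp [blockCircuit, hj]

lemma blockCircuit_of_le {k : ℕ} (hk : #S = k) {j : Fin ℓ} (hj : ℓ - k ≤ j.val) :
    blockCircuit a ℓ S h j = S.orderEmbOfFin hk ⟨j - (ℓ - k), by omega⟩ := by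
  subst hk
  exact dif_neg (by omega)

lemma mem_iff_exists_blockCircuit_eq (hS : ∀ x ∈ S, x.val < a) (hSℓ : #S ≤ ℓ) (x : Fin n) :
    x ∈ S ↔ x.val < a ∧ ∃ j, blockCircuit a ℓ S h j = x := by
  refine ⟨fun hx => ⟨hS x hx, ?_⟩, ?_⟩
  · obtain ⟨t, rfl⟩ : x ∈ Set.range (S.orderEmbOfFin rfl) := by simpa using hx
    refine ⟨⟨ℓ - #S + t, by omega⟩, ?_⟩
    rw [blockCircuit_of_le rfl (by simp)]
    congr
    simp
  · rintro ⟨hx, j, rfl⟩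
    by_cases hj : j.val < ℓ - #S
    · rw [val_blockCircuit_of_lt hj] at hx
      omega
    · rw [blockCircuit_of_le rfl (by omega)]
      exact orderEmbOfFin_mem S rfl _

lemma blockCircuit_mem {j : Fin ℓ} (hj : ℓ - #S ≤ j.val) : blockCircuit a ℓ S h j ∈ S := by
  rw [blockCircuit_of_le rfl hj]
  exact orderEmbOfFin_mem S rfl _

lemma blockCircuit_lt_blockCircuit {j j' : Fin ℓ} (hj : ℓ - #S ≤ j.val) (hjj' : j.val < j'.val) :
    blockCircuit a ℓ S h j < blockCircuit a ℓ S h j' := by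
  rw [blockCircuit_of_le rfl hj, blockCircuit_of_le rfl (by omega)]
  exact (S.orderEmbOfFin rfl).strictMono (by simp only [Fin.lt_def]; omega)

lemma injective_blockCircuit (hS : ∀ x ∈ S, x.val < a) :
    Function.Injective (blockCircuit a ℓ S h) := by
  intro j j' hjj'
  by_contra hne
  wlog hlt : j.val < j'.val generalizing j j'
  · exact this hjj'.symm (Ne.symm hne) (by omega)
  by_cases hj' : j'.val < ℓ - #S
  · have := congrArg Fin.val hjj'
    rw [val_blockCircuit_of_lt (by omega), val_blockCircuit_of_lt hj'] at this
    omega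
  · by_cases hj : j.val < ℓ - #S
    · have := hS _ (blockCircuit_mem (h := h) (not_lt.mp hj'))
      rw [← hjj', val_blockCircuit_of_lt hj] at this
      omega
    · exact (blockCircuit_lt_blockCircuit (by omega) hlt).ne hjj'

lemma isCircuit_blockCircuit (hS : ∀ x ∈ S, x.val < a) (hne : S.Nonempty) (hℓS : #S + 2 ≤ ℓ)
    (hℓd : ℓ ≤ d) : (TdnAux a d n).IsCircuit (blockCircuit a ℓ S h) := by
  have hS0 : 0 < #S := hne.card_pos
  refine ⟨injective_blockCircuit hS, fun j => ?_⟩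
  rw [adj_iff]
  rcases Nat.lt_or_ge (j.val + 1) ℓ with hj | hj
  · have hcyc := val_cyc_of_lt hj
    by_cases hjk : j.val + 1 < ℓ - #S
    · rw [val_blockCircuit_of_lt (by omega), val_blockCircuit_of_lt (by omega), hcyc]
      unfold blockIdx
      split_ifs <;> omega
    · by_cases hjk' : j.val < ℓ - #S
      · have hdrop := hS _ (blockCircuit_mem (h := h) (j := cyc j) (by omega))
        rw [val_blockCircuit_of_lt hjk']
        unfold blockIdx
        split_ifs <;> omega
      · have hup := blockCircuit_lt_blockCircuit (h := h) (j := j) (j' := cyc j) (by omega) (by omega)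
        have hfirst := hS _ (blockCircuit_mem (h := h) (j := cyc j) (by omega))
        unfold blockIdx
        split_ifs <;> omega
  · have hcyc := val_cyc_of_eq (by omega : j.val + 1 = ℓ)
    have hfirst := hS _ (blockCircuit_mem (h := h) (j := j) (by omega))
    rw [val_blockCircuit_of_lt (j := cyc j) (by omega)]
    unfold blockIdx
    split_ifs <;> omega

end BlockCircuit

section Rooted

variable [NeZero ℓ] {f : Fin ℓ → Fin n} (hf : (TdnAux a d n).IsCircuit f) (hf0 : (f 0).val = a)
include hf hf0

lemma val_eq_add_of_isCircuit (hℓd : ℓ ≤ d) {m : ℕ} (hmℓ : m < ℓ)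
    (hm : ∀ j : Fin ℓ, j.val < m → a ≤ (f j).val) (j : Fin ℓ) (hj : j.val < m) :
    (f j).val = a + j := by
  suffices ∀ t (ht : t < m), (f ⟨t, by omega⟩).val = a + t from this j hj
  intro t
  induction t using Nat.strong_induction_on with
  | _ t ih =>
  intro ht
  rcases t with _ | t
  · simpa using hf0
  · have hprev := ih t (by omega) (by omega)
    have hadj := hf.2 ⟨t, by omega⟩
    rw [show cyc (⟨t, _⟩ : Fin ℓ) = ⟨t + 1, by omega⟩ from Fin.ext (val_cyc_of_lt (by simp; omega))]
      at hadj
    rcases val_eq_succ_or_lt_of_adj hadj (by omega) (by omega) with hnext | hback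
    · omega
    · set v := f ⟨t + 1, by omega⟩
      have hge : a ≤ v.val := hm _ ht
      have hrep := ih (v.val - a) (by omega) (by omega)
      have := congrArg Fin.val (hf.1 (show f ⟨v.val - a, _⟩ = v from Fin.ext (by omega)))
      simp only at this
      omega

lemma lt_of_isCircuit_of_val_lt (hd : 2 ≤ d) {j : Fin ℓ} (hj : (f j).val < a)
    (hjℓ : j.val + 1 < ℓ) : (f (cyc j)).val < a ∧ f j < f (cyc j) := by
  obtain ⟨hlt, hle⟩ := lt_of_adj_of_lt hd (hf.2 j) hj
  refine ⟨lt_of_le_of_ne hle fun heq => ?_, hlt⟩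
  have := congrArg Fin.val (hf.1 (Fin.ext (heq.trans hf0.symm)))
  rw [val_cyc_of_lt hjℓ] at this
  simp at this

lemma tail_lt_of_isCircuit (hd : 2 ≤ d) {m : ℕ} (hm : m < ℓ) (hfm : (f ⟨m, hm⟩).val < a) (t : ℕ)
    (ht : m + t < ℓ) :
    (f ⟨m + t, ht⟩).val < a ∧ ∀ s (hs : s < t), f ⟨m + s, by omega⟩ < f ⟨m + t, ht⟩ := by
  induction t with
  | zero => exact ⟨hfm, fun s hs => absurd hs (Nat.not_lt_zero s)⟩
  | succ t ih =>
    obtain ⟨hlt, hmono⟩ := ih (by omega)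
    have hstep := lt_of_isCircuit_of_val_lt hf hf0 hd hlt (by simp; omega)
    rw [show cyc (⟨m + t, _⟩ : Fin ℓ) = ⟨m + (t + 1), ht⟩ from
      Fin.ext (val_cyc_of_lt (by simp; omega))] at hstep
    refine ⟨hstep.1, fun s hs => ?_⟩
    rcases Nat.lt_succ_iff_lt_or_eq.mp hs with hs | rfl
    · exact (hmono s hs).trans hstep.2
    · exact hstep.2

theorem exists_eq_blockCircuit (hℓd : ℓ ≤ d) {i : Fin ℓ} (hi : (f i).val < a) :
    ∃ (S : Finset (Fin n)) (h : a + ℓ ≤ n + #S), (∀ x ∈ S, x.val < a) ∧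
      f = blockCircuit a ℓ S h := by
  have hi0 : i.val ≠ 0 := fun h0 => by
    rw [show i = 0 from Fin.ext h0] at hi
    omega
  have hd : 2 ≤ d := by omega
  obtain ⟨m, hfm, hmin⟩ : ∃ m : Fin ℓ, (f m).val < a ∧ ∀ j : Fin ℓ, j.val < m → a ≤ (f j).val := by
    obtain ⟨m, hm, hmin⟩ :=
      exists_min_image {j | (f j).val < a} (fun j : Fin ℓ => j.val) ⟨i, by simpa using hi⟩
    simp only [mem_filter, mem_univ, true_and] at hm hmin
    exact ⟨m, hm, fun j hj => not_lt.mp fun h => (hmin j h).not_gt hj⟩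
  have hm0 : m.val ≠ 0 := fun h0 => by
    rw [show m = 0 from Fin.ext h0] at hfm
    omega
  have hsingle := val_eq_add_of_isCircuit hf hf0 hℓd m.isLt hmin
  have htail := tail_lt_of_isCircuit hf hf0 hd m.isLt hfm
  set e : Fin (ℓ - m) → Fin n := fun t => f ⟨m + t, by omega⟩
  have he : StrictMono e := fun s t hst => (htail t (by omega)).2 s hst
  set S := (univ : Finset (Fin (ℓ - m))).image e
  have hSk : #S = ℓ - m := by
    rw [card_image_of_injective _ he.injective, card_univ, Fintype.card_fin]
  have hSe : e = S.orderEmbOfFin hSk :=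
    orderEmbOfFin_unique hSk (fun t => mem_image_of_mem e (mem_univ t)) he
  have h : a + ℓ ≤ n + #S := by
    have hlast := hsingle ⟨m - 1, by omega⟩ (show m.val - 1 < m.val by omega)
    have := (f ⟨m - 1, by omega⟩).isLt
    simp only at hlast
    omega
  refine ⟨S, h, ?_, funext fun j => ?_⟩
  · simp only [S, mem_image, mem_univ, true_and, forall_exists_index, forall_apply_eq_imp_iff]
    exact fun t => (htail t (by omega)).1
  · by_cases hj : j.val < m
    · exact Fin.ext ((hsingle j hj).trans (val_blockCircuit_of_lt (by omega)).symm)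
    · rw [blockCircuit_of_le hSk (by omega), ← hSe]
      exact congrArg f (Fin.ext (by simp; omega))

end Rooted

theorem card_rooted_isCircuit [NeZero ℓ] (hℓ : a + 2 ≤ ℓ) (hℓd : ℓ ≤ d) (hn : a + ℓ ≤ n + 1)
    {w r : Fin n} (hw : w.val < a) (hr : r.val = a) :
    Nat.card {f : Fin ℓ → Fin n // (TdnAux a d n).IsCircuit f ∧ (∃ i, f i = w) ∧ f 0 = r} =
      2 ^ (a - 1) := by
  set B : Finset (Fin n) := {x | x.val < a}
  have hB : #B = a := by simp [B, Fin.card_filter_val_lt]; omega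
  have hsubset {S : Finset (Fin n)} : S ⊆ B ↔ ∀ x ∈ S, x.val < a := by simp [B, subset_iff]
  have hsmall {S : Finset (Fin n)} (hS : S ⊆ B) : #S + 2 ≤ ℓ := by
    have := hB ▸ card_le_card hS
    omega
  have hbound {S : Finset (Fin n)} (hwS : w ∈ S) : a + ℓ ≤ n + #S := by
    have := card_pos.mpr ⟨w, hwS⟩
    omega
  have hsubsets := natCard_subset_and_mem (show w ∈ B by simpa [B] using hw)
  rw [hB] at hsubsets
  rw [← hsubsets]
  symm
  refine Nat.card_eq_of_bijective (fun S => ⟨blockCircuit a ℓ S.1 (hbound S.2.2),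
    isCircuit_blockCircuit (hsubset.mp S.2.1) ⟨w, S.2.2⟩ (hsmall S.2.1) hℓd,
    ((mem_iff_exists_blockCircuit_eq (hsubset.mp S.2.1) (le_of_add_le_left (hsmall S.2.1)) w).mp
      S.2.2).2,
    Fin.ext ?_⟩) ⟨?_, ?_⟩
  · have := card_pos.mpr ⟨w, S.2.2⟩
    rw [val_blockCircuit_of_lt (by have := hsmall S.2.1; simp; omega), hr, Fin.val_zero, add_zero]
  · rintro ⟨S, hSB, hwS⟩ ⟨S', hSB', hwS'⟩ h
    have hfun : blockCircuit a ℓ S (hbound hwS) = blockCircuit a ℓ S' (hbound hwS') :=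
      congrArg Subtype.val h
    refine Subtype.ext (Finset.ext fun x => ?_)
    rw [mem_iff_exists_blockCircuit_eq (h := hbound hwS) (hsubset.mp hSB)
        (le_of_add_le_left (hsmall hSB)),
      mem_iff_exists_blockCircuit_eq (h := hbound hwS') (hsubset.mp hSB')
        (le_of_add_le_left (hsmall hSB')), hfun]
  · rintro ⟨f, hf, ⟨i, hi⟩, hf0⟩
    obtain ⟨S, h, hS, rfl⟩ := exists_eq_blockCircuit hf (hf0 ▸ hr) hℓd (i := i) (hi ▸ hw)
    have hwS : w ∈ S :=
      (mem_iff_exists_blockCircuit_eq hS (le_of_add_le_left (hsmall (hsubset.mpr hS))) w).mpr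
        ⟨hw, i, hi⟩
    exact ⟨⟨S, hsubset.mpr hS, hwS⟩, rfl⟩

theorem circCountAt_eq (hℓ : a + 2 ≤ ℓ) (hℓd : ℓ ≤ d) (hn : a + ℓ ≤ n + 1) {w : Fin n}
    (hw : w.val < a) : (TdnAux a d n).circCountAt ℓ w = 2 ^ (a - 1) := by
  have : NeZero ℓ := ⟨by omega⟩
  have hthrough (f : Fin ℓ → Fin n) : (TdnAux a d n).IsCircuit f ∧ (∃ i, f i = w) ↔
      (TdnAux a d n).IsCircuit f ∧ (∃ i, f i = w) ∧ ∃ i, f i = ⟨a, by omega⟩ := by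
    refine ⟨fun ⟨hf, hfw⟩ => ⟨hf, hfw, ?_⟩, fun h => ⟨h.1, h.2.1⟩⟩
    obtain ⟨i, rfl⟩ := hfw
    obtain ⟨j, hj⟩ := exists_val_eq_of_isCircuit (by omega) hf hw
    exact ⟨j, Fin.ext hj⟩
  rw [circCountAt_eq_card_div, Nat.card_congr (Equiv.subtypeEquivRight hthrough),
    card_isCircuit_through_eq_mul, card_rooted_isCircuit hℓ hℓd hn hw rfl,
    Nat.mul_div_cancel_left _ (NeZero.pos ℓ)]

end TdnAux

theorem statement_12_general (n d ℓ : ℕ) (hdn : d < n)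
    (hℓ1 : n - d + 3 ≤ ℓ) (hℓ2 : ℓ ≤ d)
    (w : Fin n) (hw : w.val < (n - d + 2) / 2) :
    (Tdnm d n).circCountAt ℓ w = 2 ^ ((n - d + 2) / 2 - 1) :=
  TdnAux.circCountAt_eq (by omega) hℓ2 (by omega) hw

/-- For `n > d ≥ 3` with `2d ≥ n+3` and `n-d+3 ≤ ℓ ≤ d`, every vertex `w` of
the first block `TT_{⌈(n-d+1)/2⌉}` of `T_{d,n}^-` lies on exactly
`2^(⌈(n-d+1)/2⌉ - 1)` circuits of length `ℓ`. -/
theorem statement_12 (n d ℓ : ℕ) (hd : 3 ≤ d) (hdn : d < n)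
    (h2d : n + 3 ≤ 2 * d) (hℓ1 : n - d + 3 ≤ ℓ) (hℓ2 : ℓ ≤ d)
    (w : Fin n) (hw : w.val < (n - d + 2) / 2) :
    (Tdnm d n).circCountAt ℓ w = 2 ^ ((n - d + 2) / 2 - 1) :=
  statement_12_general n d ℓ hdn hℓ1 hℓ2 w hw
end
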